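/- arXiv:1905.11162 — 3 statements merged into one kernel-verified Lean document; each statement's English description precedes it below -/
import Mathlib

section
/- For a lower semicontinuous W : ℝ^N → [0,∞] satisfying (H1) and (H2), the geodesic pseudo-distance geod_W(x,y) := inf over continuous piecewise locally Lipschitz curves σ : [-1,1] → ℝ^N with σ(-1)=x, σ(1)=y of ∫_{-1}^{1} 2√(W(σ(t))) |σ'(t)| dt satisfies: for every δ > 0 there exists ε > 0 such that |x − y| ≥ δ implies geod_W(x,y) ≥ ε. In particular geod_W(x,y) > 0 whenever x ≠ y. -/
open MeasureTheory Metric Set Filter Topology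
open scoped ENNReal NNReal

/-- A curve `σ : [-1,1] → ℝ^N` is piecewise locally Lipschitz: there is a finite partition
`-1 = t₀ < t₁ < ⋯ < t_k = 1` such that `σ` is locally Lipschitz on each open subinterval. -/
def PiecewiseLocLip {N : ℕ} (σ : ℝ → EuclideanSpace ℝ (Fin N)) : Prop :=
  ∃ (k : ℕ) (t : Fin (k + 1) → ℝ), t 0 = -1 ∧ t (Fin.last k) = 1 ∧ StrictMono t ∧
    ∀ i : Fin k, ∀ x ∈ Set.Ioo (t i.castSucc) (t i.succ),
      ∃ (K : ℝ≥0) (s : Set ℝ), s ∈ nhdsWithin x (Set.Ioo (t i.castSucc) (t i.succ)) ∧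
        LipschitzOnWith K σ s

/-- Admissible curves from `x` to `y`: continuous on `[-1,1]`, piecewise locally Lipschitz,
with prescribed endpoints. -/
def AdmissibleCurve {N : ℕ} (x y : EuclideanSpace ℝ (Fin N))
    (σ : ℝ → EuclideanSpace ℝ (Fin N)) : Prop :=
  ContinuousOn σ (Set.Icc (-1) 1) ∧ σ (-1) = x ∧ σ 1 = y ∧ PiecewiseLocLip σ

/-- The weighted length `∫_{-1}^1 2 √(W(σ(t))) |σ'(t)| dt` of a curve. -/
noncomputable def curveCost {N : ℕ} (W : EuclideanSpace ℝ (Fin N) → ℝ≥0∞)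
    (σ : ℝ → EuclideanSpace ℝ (Fin N)) : ℝ≥0∞ :=
  ∫⁻ s in Set.Icc (-1 : ℝ) 1, 2 * (W (σ s)) ^ (1/2 : ℝ) * (‖deriv σ s‖₊ : ℝ≥0∞)

/-- The geodesic pseudo-distance associated to the degenerate metric `4 W g₀`. -/
noncomputable def geod {N : ℕ} (W : EuclideanSpace ℝ (Fin N) → ℝ≥0∞)
    (x y : EuclideanSpace ℝ (Fin N)) : ℝ≥0∞ :=
  ⨅ σ ∈ {σ : ℝ → EuclideanSpace ℝ (Fin N) | AdmissibleCurve x y σ}, curveCost W σ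

/-! Fix a curve from `x` to `y` with `|x - y| ≥ δ`. Since `W` has only finitely many zeros, some
annulus around `x`, of width comparable to `δ / (#zeros + 1)`, stays a fixed distance away from
all of them; by lower semicontinuity and (H2), `W` is bounded below there by some `c₀ > 0`. The
curve has to cross the annulus, and the coarea-type inequality `|F(A)| ≤ ∫_A |F'|` applied to
`F = |σ - x|` shows that it spends Euclidean length at least the width of the annulus inside it,
hence weighted length at least `2 √c₀ · width`. -/

theorem LipschitzOnWith.volume_image_null {f : ℝ → ℝ} {K : ℝ≥0} {s : Set ℝ}
    (hf : LipschitzOnWith K f s) (hs : volume s = 0) : volume (f '' s) = 0 := by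
  simpa [hs] using hf.hausdorffMeasure_image_le (d := 1) zero_le_one

theorem LocallyLipschitzOn.volume_image_null {f : ℝ → ℝ} {s : Set ℝ}
    (hf : LocallyLipschitzOn s f) (hs : volume s = 0) : volume (f '' s) = 0 := by
  choose! K t ht hlip using fun x (hx : x ∈ s) => hf hx
  obtain ⟨T, hTs, hTc, hsT⟩ := TopologicalSpace.countable_cover_nhdsWithin ht
  have hcover : f '' s ⊆ ⋃ x ∈ T, f '' (s ∩ t x) := by
    rintro _ ⟨u, hu, rfl⟩
    obtain ⟨x, hxT, hux⟩ := mem_iUnion₂.1 (hsT hu)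
    exact mem_iUnion₂.2 ⟨x, hxT, u, ⟨hu, hux⟩, rfl⟩
  refine measure_mono_null hcover ((measure_biUnion_null_iff hTc).2 fun x hx => ?_)
  exact ((hlip x (hTs hx)).mono inter_subset_right).volume_image_null
    (measure_mono_null inter_subset_left hs)

theorem LocallyLipschitzOn.ae_differentiableAt {V : Type*} [NormedAddCommGroup V]
    [NormedSpace ℝ V] [FiniteDimensional ℝ V] {f : ℝ → V} {U : Set ℝ} (hU : IsOpen U)
    (hf : LocallyLipschitzOn U f) : ∀ᵐ x, x ∈ U → DifferentiableAt ℝ f x := by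
  rw [ae_iff]
  refine measure_null_of_locally_null _ fun x hx => ?_
  obtain ⟨hxU, -⟩ := Classical.not_imp.1 hx
  obtain ⟨K, t, ht, hlip⟩ := hf hxU
  rw [hU.nhdsWithin_eq hxU] at ht
  refine ⟨_, inter_mem_nhdsWithin _ (interior_mem_nhds.2 ht), ?_⟩
  refine measure_mono_null (fun y hy => ?_)
    (ae_iff.1 (hlip.mono interior_subset).ae_differentiableWithinAt_of_mem_real)
  exact fun h => (Classical.not_imp.1 hy.1).2
    ((h hy.2).differentiableAt (isOpen_interior.mem_nhds hy.2))

theorem volume_image_le_lintegral_enorm_deriv {f : ℝ → ℝ} {s : Set ℝ} (hs : MeasurableSet s)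
    (hf : ∀ x ∈ s, DifferentiableAt ℝ f x) :
    volume (f '' s) ≤ ∫⁻ x in s, ‖deriv f x‖ₑ := by
  simpa only [ContinuousLinearMap.det_toSpanSingleton, Real.enorm_eq_ofReal_abs] using
    addHaar_image_le_lintegral_abs_det_fderiv volume hs
      (fun x hx => (hf x hx).hasDerivAt.hasFDerivAt.hasFDerivWithinAt)

theorem abs_deriv_comp_le {E : Type*} [NormedAddCommGroup E] [NormedSpace ℝ E] {φ : E → ℝ}
    {K : ℝ≥0} (hφ : LipschitzWith K φ) {σ : ℝ → E} {u : ℝ} (hσ : DifferentiableAt ℝ σ u) :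
    |deriv (φ ∘ σ) u| ≤ K * ‖deriv σ u‖ := by
  by_cases hF : DifferentiableAt ℝ (φ ∘ σ) u
  · have hlim₁ := (hasDerivAt_iff_tendsto_slope.1 hF.hasDerivAt).abs
    have hlim₂ := ((hasDerivAt_iff_tendsto_slope.1 hσ.hasDerivAt).norm).const_mul (K : ℝ)
    refine le_of_tendsto_of_tendsto' hlim₁ hlim₂ fun y => ?_
    simp only [slope_def_module, smul_eq_mul, norm_smul, abs_mul, Real.norm_eq_abs, abs_inv,
      Function.comp_apply]
    rw [mul_left_comm]
    gcongr
    simpa [Real.dist_eq, dist_eq_norm] using hφ.dist_le_mul (σ y) (σ u)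
  · rw [deriv_zero_of_not_differentiableAt hF, abs_zero]
    positivity

theorem exists_subset_ofReal_sub_le_lintegral_enorm_deriv {E : Type*} [NormedAddCommGroup E]
    [NormedSpace ℝ E] [FiniteDimensional ℝ E] {σ : ℝ → E} {φ : E → ℝ} (hφ : LipschitzWith 1 φ)
    {a b : ℝ} (hab : a ≤ b) (hσc : ContinuousOn σ (Icc a b)) {P : Set ℝ} (hP : IsOpen P)
    (hσP : LocallyLipschitzOn P σ) (hPc : (Icc a b \ P).Countable) {s₁ s₂ : ℝ}
    (ha : φ (σ a) ≤ s₁) (hb : s₂ ≤ φ (σ b)) :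
    ∃ A ⊆ Icc a b, MeasurableSet A ∧ (∀ u ∈ A, φ (σ u) ∈ Icc s₁ s₂) ∧
      ENNReal.ofReal (s₂ - s₁) ≤ ∫⁻ u in A, ‖deriv σ u‖ₑ := by
  set F := φ ∘ σ
  have hFc : ContinuousOn F (Icc a b) := hφ.continuous.comp_continuousOn hσc
  have hFP : LocallyLipschitzOn P F := fun x hx => by
    obtain ⟨K, t, ht, hK⟩ := hσP hx
    exact ⟨1 * K, t, ht, hφ.comp_lipschitzOnWith hK⟩
  set D := {u | DifferentiableAt ℝ σ u ∧ DifferentiableAt ℝ F u}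
  have hD : MeasurableSet D :=
    (measurableSet_of_differentiableAt ℝ σ).inter (measurableSet_of_differentiableAt ℝ F)
  set B := Icc a b ∩ F ⁻¹' Icc s₁ s₂
  set A := B ∩ P ∩ D
  have hB : IsClosed B := hFc.preimage_isClosed_of_isClosed isClosed_Icc isClosed_Icc
  have hA : MeasurableSet A := (hB.measurableSet.inter hP.measurableSet).inter hD
  refine ⟨A, fun u hu => hu.1.1.1, hA, fun u hu => hu.1.1.2, ?_⟩
  have hIcc : Icc s₁ s₂ ⊆ F '' B := fun v hv => by
    obtain ⟨u, hu, rfl⟩ := intermediate_value_Icc hab hFc ⟨ha.trans hv.1, hv.2.trans hb⟩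
    exact ⟨u, ⟨hu, hv⟩, rfl⟩
  have hPD : volume (P \ D) = 0 := by
    refine measure_mono_null (fun u ⟨huP, huD⟩ => ?_) (measure_union_null
      (ae_iff.1 (hσP.ae_differentiableAt hP)) (ae_iff.1 (hFP.ae_differentiableAt hP)))
    by_cases hσu : DifferentiableAt ℝ σ u
    · exact Or.inr fun h => huD ⟨hσu, h huP⟩
    · exact Or.inl fun h => hσu (h huP)
  have hBAN : B ⊆ A ∪ ((Icc a b \ P) ∪ (P \ D)) := fun u hu => by
    by_cases huP : u ∈ P
    · by_cases huD : u ∈ D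
      · exact Or.inl ⟨⟨hu, huP⟩, huD⟩
      · exact Or.inr (Or.inr ⟨huP, huD⟩)
    · exact Or.inr (Or.inl ⟨hu.1, huP⟩)
  have hnull : volume (F '' ((Icc a b \ P) ∪ (P \ D))) = 0 := by
    rw [image_union]
    exact measure_union_null ((hPc.image F).measure_zero _)
      ((hFP.mono sdiff_subset).volume_image_null hPD)
  calc ENNReal.ofReal (s₂ - s₁) = volume (Icc s₁ s₂) := Real.volume_Icc.symm
    _ ≤ volume (F '' A ∪ F '' ((Icc a b \ P) ∪ (P \ D))) := by
        rw [← image_union]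
        exact measure_mono (hIcc.trans (image_mono hBAN))
    _ ≤ volume (F '' A) := (measure_union_le _ _).trans (by rw [hnull, add_zero])
    _ ≤ ∫⁻ u in A, ‖deriv F u‖ₑ :=
        volume_image_le_lintegral_enorm_deriv hA fun u hu => hu.2.2
    _ ≤ ∫⁻ u in A, ‖deriv σ u‖ₑ := setLIntegral_mono' hA fun u hu => by
        simpa only [Real.enorm_eq_ofReal_abs, ofReal_norm, NNReal.coe_one, one_mul] using
          ENNReal.ofReal_le_ofReal (abs_deriv_comp_le hφ hu.2.1)

theorem Icc_diff_iUnion_Ioo_subset_range {k : ℕ} (t : Fin (k + 1) → ℝ) :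
    Icc (t 0) (t (Fin.last k)) \ ⋃ i : Fin k, Ioo (t i.castSucc) (t i.succ) ⊆ range t := by
  rintro u ⟨⟨h0, hlast⟩, hu⟩
  by_contra hrange
  have hne : ∀ i, t i ≠ u := fun i h => hrange ⟨i, h⟩
  have hlt : ∀ i, t i < u := by
    refine Fin.induction (h0.lt_of_ne (hne 0)) fun i hi => ?_
    refine (not_lt.1 fun h => hu (mem_iUnion.2 ⟨i, hi, h⟩)).lt_of_ne (hne _)
  exact (hlt (Fin.last k)).not_ge hlast

theorem PiecewiseLocLip.exists_isOpen_locallyLipschitzOn {N : ℕ}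
    {σ : ℝ → EuclideanSpace ℝ (Fin N)} (hσ : PiecewiseLocLip σ) :
    ∃ P : Set ℝ, IsOpen P ∧ LocallyLipschitzOn P σ ∧ (Icc (-1) 1 \ P).Countable := by
  obtain ⟨k, t, ht0, htk, -, hlip⟩ := hσ
  refine ⟨⋃ i : Fin k, Ioo (t i.castSucc) (t i.succ), isOpen_iUnion fun _ => isOpen_Ioo,
    fun x hx => ?_, ?_⟩
  · obtain ⟨i, hi⟩ := mem_iUnion.1 hx
    obtain ⟨K, s, hs, hK⟩ := hlip i x hi
    rw [isOpen_Ioo.nhdsWithin_eq hi] at hs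
    exact ⟨K, s, mem_nhdsWithin_of_mem_nhds hs, hK⟩
  · rw [← ht0, ← htk]
    exact (countable_range t).mono (Icc_diff_iUnion_Ioo_subset_range t)

theorem LowerSemicontinuous.exists_pos_le_of_isClosed {E : Type*} [NormedAddCommGroup E]
    [ProperSpace E] {W : E → ℝ≥0∞} (hW : LowerSemicontinuous W)
    (hlarge : ∃ c : ℝ≥0∞, 0 < c ∧ ∃ R : ℝ, ∀ z : E, R ≤ ‖z‖ → c ≤ W z)
    {C : Set E} (hC : IsClosed C) (hpos : ∀ w ∈ C, W w ≠ 0) :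
    ∃ c₀ : ℝ≥0∞, 0 < c₀ ∧ ∀ w ∈ C, c₀ ≤ W w := by
  obtain ⟨c, hc, R, hR⟩ := hlarge
  set K := C ∩ closedBall 0 R
  have hK : IsCompact K := (isCompact_closedBall 0 R).inter_left hC
  have hfar : ∀ w ∈ C, w ∉ K → c ≤ W w := fun w hw hwK =>
    hR w (not_lt.1 fun h => hwK ⟨hw, mem_closedBall_zero_iff.2 h.le⟩)
  rcases K.eq_empty_or_nonempty with hKe | hKne
  · exact ⟨c, hc, fun w hw => hfar w hw (hKe ▸ notMem_empty w)⟩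
  obtain ⟨m, hmK, hmin⟩ := (hW.lowerSemicontinuousOn K).exists_isMinOn hKne hK
  refine ⟨min c (W m), lt_min hc (pos_iff_ne_zero.2 (hpos m hmK.1)), fun w hw => ?_⟩
  by_cases hwK : w ∈ K
  · exact (min_le_right _ _).trans (hmin hwK)
  · exact (min_le_left _ _).trans (hfar w hw hwK)

theorem LowerSemicontinuous.exists_pos_le_of_forall_le_dist {E : Type*} [NormedAddCommGroup E]
    [ProperSpace E] {W : E → ℝ≥0∞} (hW : LowerSemicontinuous W)
    (hlarge : ∃ c : ℝ≥0∞, 0 < c ∧ ∃ R : ℝ, ∀ z : E, R ≤ ‖z‖ → c ≤ W z) {r : ℝ} (hr : 0 < r) :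
    ∃ c₀ : ℝ≥0∞, 0 < c₀ ∧ ∀ w, (∀ z, W z = 0 → r ≤ dist w z) → c₀ ≤ W w := by
  refine hW.exists_pos_le_of_isClosed hlarge (C := {w | ∀ z, W z = 0 → r ≤ dist w z}) ?_
    fun w hw hw0 => (hr.trans_le ((hw w hw0).trans_eq (dist_self w))).false
  simp only [ofPred_forall]
  exact isClosed_iInter fun z => isClosed_iInter fun _ =>
    isClosed_le continuous_const (continuous_id.dist continuous_const)

theorem exists_le_card_forall_notMem_Ioo (D : Finset ℝ) {a : ℝ} (ha : 0 < a) :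
    ∃ j : ℕ, j ≤ D.card ∧ ∀ d ∈ D, d ∉ Ioo (j * a) ((j + 1) * a) := by
  obtain ⟨j, hj, hjD⟩ := Finset.exists_mem_notMem_of_card_lt_card
    (t := Finset.range (D.card + 1)) (s := D.image fun d => ⌊d / a⌋₊)
    (by rw [Finset.card_range]; exact Nat.lt_succ_of_le Finset.card_image_le)
  refine ⟨j, Nat.lt_succ_iff.1 (Finset.mem_range.1 hj), fun d hd hdj => hjD ?_⟩
  have hd₀ : 0 ≤ d := (by positivity : (0 : ℝ) ≤ j * a).trans hdj.1.le
  refine Finset.mem_image.2 ⟨d, hd, ?_⟩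
  rw [Nat.floor_eq_iff (div_nonneg hd₀ ha.le), le_div_iff₀ ha, div_lt_iff₀ ha]
  exact ⟨hdj.1.le, hdj.2⟩

theorem exists_annulus_forall_le_dist {E : Type*} [MetricSpace E] (Z : Finset E) (x : E) {a : ℝ}
    (ha : 0 < a) : ∃ j : ℕ, j ≤ Z.card ∧ ∀ w, dist w x ∈ Icc (j * a + a / 4) (j * a + 3 * a / 4) →
      ∀ z ∈ Z, a / 4 ≤ dist w z := by
  obtain ⟨j, hj, hjZ⟩ := exists_le_card_forall_notMem_Ioo (Z.image (dist x)) ha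
  refine ⟨j, hj.trans Finset.card_image_le, fun w ⟨hw₁, hw₂⟩ z hz => ?_⟩
  have hxz := hjZ _ (Finset.mem_image_of_mem _ hz)
  rw [mem_Ioo, not_and_or, not_lt, not_lt] at hxz
  have h₁ := dist_triangle x w z
  have h₂ := dist_triangle w z x
  rw [dist_comm x w] at h₁
  rw [dist_comm z x] at h₂
  rcases hxz with h | h <;> linarith

theorem le_geod_of_forall_mem_annulus {N : ℕ} (W : EuclideanSpace ℝ (Fin N) → ℝ≥0∞)
    {x₀ x y : EuclideanSpace ℝ (Fin N)} {s₁ s₂ : ℝ} {c₀ : ℝ≥0∞} (hx : dist x x₀ ≤ s₁)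
    (hy : s₂ ≤ dist y x₀) (hW : ∀ w, dist w x₀ ∈ Icc s₁ s₂ → c₀ ≤ W w) :
    2 * c₀ ^ (1 / 2 : ℝ) * ENNReal.ofReal (s₂ - s₁) ≤ geod W x y := by
  refine le_iInf₂ fun σ ⟨hσc, hσx, hσy, hσ⟩ => ?_
  obtain ⟨P, hP, hσP, hPc⟩ := hσ.exists_isOpen_locallyLipschitzOn
  obtain ⟨A, hA, hAm, hAW, hlen⟩ := exists_subset_ofReal_sub_le_lintegral_enorm_deriv
    (LipschitzWith.dist_left x₀) (by norm_num) hσc hP hσP hPc (hσx ▸ hx) (hσy ▸ hy)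
  calc 2 * c₀ ^ (1 / 2 : ℝ) * ENNReal.ofReal (s₂ - s₁)
      ≤ 2 * c₀ ^ (1 / 2 : ℝ) * ∫⁻ u in A, ‖deriv σ u‖ₑ := by gcongr
    _ ≤ ∫⁻ u in A, 2 * c₀ ^ (1 / 2 : ℝ) * ‖deriv σ u‖ₑ := lintegral_const_mul_le _ _
    _ ≤ ∫⁻ u in A, 2 * W (σ u) ^ (1 / 2 : ℝ) * ‖deriv σ u‖ₑ :=
        setLIntegral_mono' hAm fun u hu => by
          gcongr
          exact hW _ (hAW u hu)
    _ ≤ curveCost W σ := lintegral_mono_set hA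

/-- For lower semicontinuous `W` satisfying (H1) and (H2): for every `δ > 0`
there exists `ε > 0` such that `|x - y| ≥ δ` implies `geod_W(x,y) ≥ ε`; in particular
`geod_W(x,y) > 0` whenever `x ≠ y`. -/
theorem geod_nondegenerate {N : ℕ} (W : EuclideanSpace ℝ (Fin N) → ℝ≥0∞)
    (hlsc : LowerSemicontinuous W)
    (hH1 : {z : EuclideanSpace ℝ (Fin N) | W z = 0}.Finite)
    (hH2 : ∃ c : ℝ≥0∞, 0 < c ∧ ∃ R : ℝ, ∀ z : EuclideanSpace ℝ (Fin N), R ≤ ‖z‖ → c ≤ W z) :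
    (∀ δ : ℝ, 0 < δ → ∃ ε : ℝ≥0∞, 0 < ε ∧
      ∀ x y : EuclideanSpace ℝ (Fin N), δ ≤ dist x y → ε ≤ geod W x y) ∧
    ∀ x y : EuclideanSpace ℝ (Fin N), x ≠ y → 0 < geod W x y := by
  have uniform : ∀ δ : ℝ, 0 < δ → ∃ ε : ℝ≥0∞, 0 < ε ∧
      ∀ x y : EuclideanSpace ℝ (Fin N), δ ≤ dist x y → ε ≤ geod W x y := by
    intro δ hδ
    set Z := hH1.toFinset
    set a := δ / (Z.card + 1)
    have ha : 0 < a := by positivity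
    have hδa : (Z.card + 1) * a = δ := mul_div_cancel₀ _ (by positivity)
    obtain ⟨c₀, hc₀, hc₀W⟩ :=
      hlsc.exists_pos_le_of_forall_le_dist hH2 (r := a / 4) (by positivity)
    refine ⟨2 * c₀ ^ (1 / 2 : ℝ) * ENNReal.ofReal (a / 2), ?_, fun x y hxy => ?_⟩
    · have hc₀' := ENNReal.rpow_pos_of_nonneg hc₀ (by norm_num : (0 : ℝ) ≤ 1 / 2)
      have ha' : 0 < ENNReal.ofReal (a / 2) := ENNReal.ofReal_pos.2 (by positivity)
      positivity
    obtain ⟨j, hjZ, hj⟩ := exists_annulus_forall_le_dist Z x ha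
    have hjδ : j * a + 3 * a / 4 ≤ δ := by
      have : (j : ℝ) ≤ Z.card := by exact_mod_cast hjZ
      nlinarith
    have hwidth : a / 2 = (j * a + 3 * a / 4) - (j * a + a / 4) := by ring
    rw [hwidth]
    refine le_geod_of_forall_mem_annulus W (by rw [dist_self]; positivity)
      (by rw [dist_comm]; linarith) fun w hw => hc₀W w fun z hz => ?_
    exact hj w hw z (hH1.mem_toFinset.2 hz)
  refine ⟨uniform, fun x y hxy => ?_⟩
  obtain ⟨ε, hε, h⟩ := uniform (dist x y) (dist_pos.2 hxy)
  exact hε.trans_le (h x y le_rfl)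
end

section
/- Let W : ℝ^N → [0,∞] be lower semicontinuous. For every open interval I ⊂ ℝ and every σ ∈ H^1_loc(I, ℝ^N) with ∫_I |σ'|² < ∞ which admits limits σ(inf I) and σ(sup I) at the endpoints, the energy E_W(σ,I) = ∫_I (|σ'(t)|² + W(σ(t))) dt is at least geod_W(σ(inf I), σ(sup I)). -/
open MeasureTheory Metric Set Filter Topology
open scoped ENNReal NNReal

/-!
Reparametrize `σ` by `t ↦ t + ∫ₐᵗ |σ'|`, rescaled to `[-1, 1]`: with `ψ` the inverse
parametrization, `γ = σ ∘ ψ` is Lipschitz, and extending it by the limits `pa`, `pb` gives an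
admissible curve. To compare its cost with the energy, let `R s` be the energy of `σ` on
`(a, ψ s)`. On any window where `W ∘ γ ≥ r²`, Young's inequality `2 r |σ'| ≤ |σ'|² + r²` gives
`2 r |γ s' - γ s| ≤ R s' - R s`; by lower semicontinuity of `W` such windows exist to the right
of every point, so `2 √(W ∘ γ) |γ'| ≤ R'` wherever both derivatives exist, and the integral of the
derivative of the monotone function `R` is at most `R 1 - R (-1)`, the energy.
-/

theorem eventually_nhdsGT_forall_Ioo {α : Type*} [LinearOrder α] [TopologicalSpace α]
    [OrderTopology α] [NoMaxOrder α] [NoMinOrder α] {s : α} {P : α → Prop}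
    (h : ∀ᶠ u in 𝓝 s, P u) : ∀ᶠ s' in 𝓝[>] s, ∀ u ∈ Ioo s s', P u := by
  obtain ⟨l, r, hs, hsub⟩ := mem_nhds_iff_exists_Ioo_subset.1 h
  filter_upwards [Ioo_mem_nhdsGT hs.2] with s' hs' u hu
  exact hsub ⟨hs.1.trans hu.1, hu.2.trans hs'.2⟩

theorem monotone_intervalIntegral_of_nonneg {f : ℝ → ℝ} (hf : Integrable f) (h0 : 0 ≤ f)
    (a : ℝ) : Monotone fun x => ∫ t in a..x, f t := fun x y hxy => by
  rw [← sub_nonneg, intervalIntegral.integral_interval_sub_left hf.intervalIntegrable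
    hf.intervalIntegrable]
  exact intervalIntegral.integral_nonneg hxy fun t _ => h0 t

theorem ofReal_intervalIntegral_toReal {F : ℝ → ℝ≥0∞} {x y : ℝ} (hxy : x ≤ y)
    (hF : AEMeasurable F (volume.restrict (Ioc x y))) (hfin : ∫⁻ t in Ioc x y, F t ≠ ⊤) :
    ENNReal.ofReal (∫ t in x..y, (F t).toReal) = ∫⁻ t in Ioc x y, F t := by
  rw [intervalIntegral.integral_of_le hxy, integral_toReal hF (ae_lt_top' hF hfin),
    ENNReal.ofReal_toReal hfin]

theorem setLIntegral_Ioo_le_of_le_hasDerivAt {R : ℝ → ℝ} (hR : Monotone R) (hRc : Continuous R)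
    {u : ℝ → ℝ≥0∞} {x y : ℝ}
    (h : ∀ᵐ s, s ∈ Ioo x y → ∀ d, HasDerivAt R d s → u s ≤ ENNReal.ofReal d) :
    ∫⁻ s in Ioo x y, u s ≤ ENNReal.ofReal (R y - R x) := by
  let S : StieltjesFunction ℝ := ⟨R, hR, fun _ => hRc.continuousWithinAt⟩
  calc ∫⁻ s in Ioo x y, u s ≤ ∫⁻ s in Ioo x y, S.measure.rnDeriv volume s := by
        refine setLIntegral_mono_ae' measurableSet_Ioo ?_
        filter_upwards [h, S.ae_hasDerivAt] with s hs hd hmem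
        exact (hs hmem _ hd).trans ENNReal.ofReal_toReal_le
    _ ≤ S.measure (Ioo x y) := Measure.setLIntegral_rnDeriv_le _
    _ ≤ S.measure (Ioc x y) := measure_mono Ioo_subset_Ioc_self
    _ = ENNReal.ofReal (R y - R x) := S.measure_Ioc x y

theorem Continuous.surjective_of_sub_le_sub {M : ℝ → ℝ} (hM : Continuous M)
    (h : ∀ s t, s ≤ t → t - s ≤ M t - M s) : Function.Surjective M := by
  refine hM.surjective ?_ ?_
  · refine tendsto_atTop_mono' _ ?_ (tendsto_atTop_add_const_right _ (M 0) tendsto_id)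
    filter_upwards [eventually_ge_atTop 0] with t ht
    have := h 0 t ht
    simp only [id]
    linarith
  · refine tendsto_atBot_mono' _ ?_ (tendsto_atBot_add_const_right _ (M 0) tendsto_id)
    filter_upwards [eventually_le_atBot 0] with t ht
    have := h t 0 ht
    simp only [id]
    linarith

theorem exists_reparam_intervalIntegral_le {h : ℝ → ℝ} (h0 : 0 ≤ h) (hint : Integrable h)
    {a b : ℝ} (hab : a < b) :
    ∃ ψ : ℝ → ℝ, Continuous ψ ∧ StrictMono ψ ∧ ψ (-1) = a ∧ ψ 1 = b ∧
      ∃ K : ℝ≥0, ∀ s s', s ≤ s' → ∫ t in ψ s..ψ s', h t ≤ K * (s' - s) := by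
  set M : ℝ → ℝ := fun t => t + ∫ r in a..t, h r
  have hM_sub : ∀ s t, M t - M s = (t - s) + ∫ r in s..t, h r := fun s t => by
    rw [← intervalIntegral.integral_interval_sub_left hint.intervalIntegrable
      hint.intervalIntegrable]
    ring
  have hM_exp : ∀ s t, s ≤ t → t - s ≤ M t - M s := fun s t hst => by
    rw [hM_sub]
    linarith [intervalIntegral.integral_nonneg (μ := volume) hst fun r _ => h0 r]
  have hM_mono : StrictMono M := fun s t hst => by linarith [hM_exp s t hst.le]
  let Φ := hM_mono.orderIsoOfSurjective M
    ((continuous_id.add (hint.continuous_primitive a)).surjective_of_sub_le_sub hM_exp)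
  set L := M b - M a
  have hL : 0 < L := sub_pos.2 (hM_mono hab)
  set c : ℝ → ℝ := fun s => M a + (s + 1) / 2 * L
  have hc : StrictMono c := fun s t hst => by simp only [c]; gcongr
  have hMΦ : ∀ u, M (Φ.symm u) = u := Φ.apply_symm_apply
  refine ⟨fun s => Φ.symm (c s), Φ.symm.continuous.comp (by fun_prop),
    Φ.symm.strictMono.comp hc, ?_, ?_, (L / 2).toNNReal, fun s s' hss' => ?_⟩
  · show Φ.symm (M a + (-1 + 1) / 2 * L) = a
    rw [neg_add_cancel, zero_div, zero_mul, add_zero]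
    exact Φ.symm_apply_apply a
  · show Φ.symm (M a + (1 + 1) / 2 * (M b - M a)) = b
    rw [add_self_div_two, one_mul, add_sub_cancel]
    exact Φ.symm_apply_apply b
  have hψ := (Φ.symm.strictMono.comp hc).monotone hss'
  have := hM_sub (Φ.symm (c s)) (Φ.symm (c s'))
  simp only [hMΦ, c, Function.comp_apply] at this hψ
  rw [Real.coe_toNNReal _ (by positivity)]
  linarith

section
variable {E : Type*} [NormedAddCommGroup E]

theorem ofReal_two_mul_mul_norm (r : ℝ≥0) (x : E) :
    ENNReal.ofReal (2 * r * ‖x‖) = 2 * r * ‖x‖ₑ := by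
  rw [ENNReal.ofReal_mul (by positivity), ENNReal.ofReal_mul zero_le_two, ofReal_norm,
    ENNReal.ofReal_coe_nnreal, ENNReal.ofReal_ofNat]

theorem integrableOn_of_setLIntegral_enorm_sq_ne_top {α : Type*} [MeasurableSpace α]
    {μ : Measure α} {s : Set α} {g : α → E} (hs : μ s ≠ ⊤)
    (hg : AEStronglyMeasurable g (μ.restrict s)) (h : ∫⁻ t in s, ‖g t‖ₑ ^ 2 ∂μ ≠ ⊤) :
    IntegrableOn g s μ := by
  have : IsFiniteMeasure (μ.restrict s) := isFiniteMeasure_restrict.2 hs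
  refine MemLp.integrable one_le_two ⟨hg, ?_⟩
  rw [eLpNorm_lt_top_iff_lintegral_rpow_enorm_lt_top two_ne_zero ENNReal.ofNat_ne_top]
  simpa using h.lt_top

noncomputable def energyDensity (W : E → ℝ≥0∞) (σ g : ℝ → E) (a b : ℝ) : ℝ → ℝ≥0∞ :=
  (Ioo a b).indicator fun t => ‖g t‖ₑ ^ 2 + W (σ t)

theorem ofReal_intervalIntegral_energyDensity {W : E → ℝ≥0∞} {σ g : ℝ → E} {a b x y : ℝ}
    (hF : AEMeasurable (energyDensity W σ g a b))
    (hfin : ∫⁻ t, energyDensity W σ g a b t ≠ ⊤) (hxy : x ≤ y) :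
    ENNReal.ofReal (∫ t in x..y, (energyDensity W σ g a b t).toReal) =
      ∫⁻ t in Ioo a b ∩ Ioo x y, (‖g t‖ₑ ^ 2 + W (σ t)) := by
  rw [ofReal_intervalIntegral_toReal hxy hF.restrict
      (ne_top_of_le_ne_top hfin (setLIntegral_le_lintegral _ _)),
    ← Measure.restrict_congr_set Ioo_ae_eq_Ioc, energyDensity,
    setLIntegral_indicator measurableSet_Ioo]

theorem aemeasurable_energyDensity [MeasurableSpace E] [BorelSpace E]
    {W : E → ℝ≥0∞} {σ g : ℝ → E} {a b : ℝ} (hW : Measurable W) (hσ : ContinuousOn σ (Ioo a b))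
    (hg : Measurable g) : AEMeasurable (energyDensity W σ g a b) :=
  (aemeasurable_indicator_iff measurableSet_Ioo).2 ((hg.enorm.pow_const 2).aemeasurable.add
    (hW.comp_aemeasurable (hσ.aemeasurable measurableSet_Ioo)))

variable [NormedSpace ℝ E]

theorem two_mul_rpow_mul_enorm_le_of_hasDerivAt {W : E → ℝ≥0∞} (hW : LowerSemicontinuous W)
    {γ : ℝ → E} {R : ℝ → ℝ} {s d : ℝ} {v : E} (hγ : HasDerivAt γ v s) (hR : HasDerivAt R d s)
    (hchain : ∀ r : ℝ≥0, ∀ᶠ s' in 𝓝[>] s,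
      (∀ u ∈ Ioo s s', (r : ℝ≥0∞) ^ 2 ≤ W (γ u)) → 2 * r * ‖γ s' - γ s‖ ≤ R s' - R s) :
    2 * W (γ s) ^ (1 / 2 : ℝ) * ‖v‖ₑ ≤ ENNReal.ofReal d := by
  have key : ∀ r : ℝ≥0, (r : ℝ≥0∞) ^ 2 < W (γ s) → 2 * r * ‖v‖ ≤ d := by
    intro r hr
    have hwin : ∀ᶠ s' in 𝓝[>] s, ∀ u ∈ Ioo s s', (r : ℝ≥0∞) ^ 2 ≤ W (γ u) :=
      eventually_nhdsGT_forall_Ioo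
        ((hγ.continuousAt.eventually (hW _ _ hr)).mono fun _ h => h.le)
    have hslopeγ : Tendsto (fun s' => ‖slope γ s s'‖) (𝓝[>] s) (𝓝 ‖v‖) :=
      ((hasDerivWithinAt_iff_tendsto_slope' self_notMem_Ioi).1 hγ.hasDerivWithinAt).norm
    have hslopeR : Tendsto (slope R s) (𝓝[>] s) (𝓝 d) :=
      (hasDerivWithinAt_iff_tendsto_slope' self_notMem_Ioi).1 hR.hasDerivWithinAt
    refine le_of_tendsto_of_tendsto (hslopeγ.const_mul (2 * (r : ℝ))) hslopeR ?_
    filter_upwards [hchain r, hwin, self_mem_nhdsWithin] with s' hc hw (hs' : s < s')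
    have hpos : 0 < s' - s := sub_pos.2 hs'
    rw [slope_def_field, slope, vsub_eq_sub, norm_smul, Real.norm_eq_abs, abs_inv,
      abs_of_pos hpos, ← div_eq_inv_mul, ← mul_div_assoc]
    exact div_le_div_of_nonneg_right (hc hw) hpos.le
  rw [mul_comm 2, mul_assoc]
  refine ENNReal.mul_le_of_forall_lt fun x hx y hy => ?_
  lift x to ℝ≥0 using ne_top_of_lt hx
  have hr : (x : ℝ≥0∞) ^ 2 < W (γ s) := by
    rwa [one_div, ENNReal.lt_rpow_inv_iff two_pos, ENNReal.rpow_two] at hx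
  calc (x : ℝ≥0∞) * y ≤ x * (2 * ‖v‖ₑ) := by gcongr
    _ = ENNReal.ofReal (2 * x * ‖v‖) := by rw [ofReal_two_mul_mul_norm, mul_left_comm, mul_assoc]
    _ ≤ ENNReal.ofReal d := ENNReal.ofReal_le_ofReal (key x hr)

theorem continuousOn_of_sub_eq_intervalIntegral {σ g : ℝ → E} {a b : ℝ}
    (hg : IntegrableOn g (Ioo a b))
    (hFTC : ∀ s ∈ Ioo a b, ∀ t ∈ Ioo a b, σ t - σ s = ∫ r in s..t, g r) :
    ContinuousOn σ (Ioo a b) := by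
  rcases (Ioo a b).eq_empty_or_nonempty with h | ⟨t₀, ht₀⟩
  · simp [h]
  have hsub : Ioo a b ⊆ uIcc a b := Ioo_subset_Icc_self.trans Icc_subset_uIcc
  have hint : IntervalIntegrable g volume a b :=
    (intervalIntegrable_iff_integrableOn_Ioo_of_le (ht₀.1.trans ht₀.2).le).2 hg
  have hprim := (intervalIntegral.continuousOn_primitive_interval' hint (hsub ht₀)).mono hsub
  refine ((continuousOn_const (c := σ t₀)).add hprim).congr fun t ht => ?_
  rw [Pi.add_apply, ← hFTC t₀ ht₀ t ht, add_sub_cancel]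

theorem two_mul_enorm_sub_le_setLIntegral {W : E → ℝ≥0∞} {σ g : ℝ → E} {t₀ t₁ : ℝ}
    (ht : t₀ ≤ t₁) (hσ : σ t₁ - σ t₀ = ∫ t in t₀..t₁, g t) {r : ℝ≥0}
    (hW : ∀ t ∈ Ioo t₀ t₁, (r : ℝ≥0∞) ^ 2 ≤ W (σ t)) :
    2 * r * ‖σ t₁ - σ t₀‖ₑ ≤ ∫⁻ t in Ioo t₀ t₁, (‖g t‖ₑ ^ 2 + W (σ t)) :=
  calc 2 * r * ‖σ t₁ - σ t₀‖ₑ ≤ 2 * r * ∫⁻ t in Ioo t₀ t₁, ‖g t‖ₑ := by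
        rw [hσ, intervalIntegral.integral_of_le ht, ← Measure.restrict_congr_set Ioo_ae_eq_Ioc]
        gcongr
        exact enorm_integral_le_lintegral_enorm _
    _ = ∫⁻ t in Ioo t₀ t₁, 2 * r * ‖g t‖ₑ := (lintegral_const_mul' _ _ (by finiteness)).symm
    _ ≤ ∫⁻ t in Ioo t₀ t₁, (‖g t‖ₑ ^ 2 + W (σ t)) := by
        refine setLIntegral_mono' measurableSet_Ioo fun t ht => ?_
        calc 2 * r * ‖g t‖ₑ ≤ ‖g t‖ₑ ^ 2 + r ^ 2 := by
              rw [enorm_eq_nnnorm]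
              exact_mod_cast (two_mul_le_add_sq r ‖g t‖₊).trans_eq (add_comm _ _)
          _ ≤ ‖g t‖ₑ ^ 2 + W (σ t) := by gcongr; exact hW t ht

theorem two_mul_norm_sub_le_intervalIntegral_energyDensity {W : E → ℝ≥0∞} {σ g : ℝ → E}
    {a b t₀ t₁ : ℝ} (hF : AEMeasurable (energyDensity W σ g a b))
    (hfin : ∫⁻ t, energyDensity W σ g a b t ≠ ⊤) (ht₀ : t₀ ∈ Ioo a b) (ht₁ : t₁ ∈ Ioo a b)
    (ht : t₀ ≤ t₁) (hσ : σ t₁ - σ t₀ = ∫ t in t₀..t₁, g t) {r : ℝ≥0}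
    (hW : ∀ t ∈ Ioo t₀ t₁, (r : ℝ≥0∞) ^ 2 ≤ W (σ t)) :
    2 * r * ‖σ t₁ - σ t₀‖ ≤ ∫ t in t₀..t₁, (energyDensity W σ g a b t).toReal := by
  rw [← ENNReal.ofReal_le_ofReal_iff
      (intervalIntegral.integral_nonneg ht fun _ _ => ENNReal.toReal_nonneg),
    ofReal_two_mul_mul_norm, ofReal_intervalIntegral_energyDensity hF hfin ht,
    inter_eq_right.2 (Ioo_subset_Icc_self.trans (ordConnected_Ioo.out ht₀ ht₁))]
  exact two_mul_enorm_sub_le_setLIntegral ht hσ hW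

theorem lipschitzOnWith_of_eqOn_comp {σ g γ : ℝ → E} {a b : ℝ}
    (hFTC : ∀ s ∈ Ioo a b, ∀ t ∈ Ioo a b, σ t - σ s = ∫ r in s..t, g r)
    {ψ : ℝ → ℝ} (hψ : Monotone ψ) {S : Set ℝ} (hS : MapsTo ψ S (Ioo a b))
    (hγ : EqOn γ (σ ∘ ψ) S) {K : ℝ≥0}
    (hK : ∀ s s', s ≤ s' → ∫ t in ψ s..ψ s', ‖(Ioo a b).indicator g t‖ ≤ K * (s' - s)) :
    LipschitzOnWith K γ S := by
  have key : ∀ s ∈ S, ∀ s' ∈ S, s ≤ s' → dist (γ s') (γ s) ≤ K * (s' - s) := by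
    intro s hs s' hs' hss'
    have hψle := hψ hss'
    have hsub : uIcc (ψ s) (ψ s') ⊆ Ioo a b := ordConnected_Ioo.uIcc_subset (hS hs) (hS hs')
    rw [hγ hs, hγ hs', dist_eq_norm, Function.comp_apply, Function.comp_apply,
      hFTC _ (hS hs) _ (hS hs')]
    refine (intervalIntegral.norm_integral_le_integral_norm hψle).trans
      (le_of_eq_of_le (intervalIntegral.integral_congr fun t ht => ?_) (hK s s' hss'))
    simp only [indicator_of_mem (hsub ht)]
  refine LipschitzOnWith.of_dist_le_mul fun s hs s' hs' => ?_
  rcases le_total s s' with h | h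
  · rw [dist_comm, Real.dist_eq, abs_sub_comm, abs_of_nonneg (sub_nonneg.2 h)]
    exact key s hs s' hs' h
  · rw [Real.dist_eq, abs_of_nonneg (sub_nonneg.2 h)]
    exact key s' hs' s hs h

end

section
variable {N : ℕ}

theorem AdmissibleCurve.of_lipschitzOnWith {x y : EuclideanSpace ℝ (Fin N)}
    {γ : ℝ → EuclideanSpace ℝ (Fin N)} (hc : ContinuousOn γ (Icc (-1) 1)) (h₀ : γ (-1) = x)
    (h₁ : γ 1 = y) {K : ℝ≥0} (hK : LipschitzOnWith K γ (Ioo (-1) 1)) :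
    AdmissibleCurve x y γ := by
  refine ⟨hc, h₀, h₁, 1, ![-1, 1], rfl, rfl, Fin.strictMono_iff_lt_succ.2 fun i => ?_,
    fun i => ?_⟩ <;> fin_cases i
  · norm_num
  · exact fun _ _ => ⟨K, _, self_mem_nhdsWithin, hK⟩

theorem admissibleCurve_extendFrom_comp {a b : ℝ} (hab : a < b)
    {σ : ℝ → EuclideanSpace ℝ (Fin N)} {pa pb : EuclideanSpace ℝ (Fin N)}
    (hσ : ContinuousOn σ (Ioo a b)) (hpa : Tendsto σ (𝓝[Ioo a b] a) (𝓝 pa))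
    (hpb : Tendsto σ (𝓝[Ioo a b] b) (𝓝 pb)) {ψ : ℝ → ℝ} (hψc : Continuous ψ)
    (hψm : Monotone ψ) (hψa : ψ (-1) = a) (hψb : ψ 1 = b) {K : ℝ≥0}
    (hK : LipschitzOnWith K (extendFrom (Ioo a b) σ ∘ ψ) (Ioo (-1) 1)) :
    AdmissibleCurve pa pb (extendFrom (Ioo a b) σ ∘ ψ) := by
  rw [nhdsWithin_Ioo_eq_nhdsGT hab] at hpa
  rw [nhdsWithin_Ioo_eq_nhdsLT hab] at hpb
  refine .of_lipschitzOnWith ?_ ?_ ?_ hK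
  · refine (continuousOn_Icc_extendFrom_Ioo hσ hpa hpb).comp hψc.continuousOn ?_
    simpa [hψa, hψb] using hψm.mapsTo_Icc (a := -1) (b := 1)
  · simpa [hψa] using eq_lim_at_left_extendFrom_Ioo hab hpa
  · simpa [hψb] using eq_lim_at_right_extendFrom_Ioo hab hpb

theorem curveCost_le_setLIntegral {W : EuclideanSpace ℝ (Fin N) → ℝ≥0∞}
    (hW : LowerSemicontinuous W) {a b : ℝ} {σ g : ℝ → EuclideanSpace ℝ (Fin N)}
    (hg : Measurable g) (hσ : ContinuousOn σ (Ioo a b))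
    (hFTC : ∀ s ∈ Ioo a b, ∀ t ∈ Ioo a b, σ t - σ s = ∫ r in s..t, g r)
    (hE : ∫⁻ t in Ioo a b, (‖g t‖ₑ ^ 2 + W (σ t)) ≠ ⊤)
    {ψ : ℝ → ℝ} (hψc : Continuous ψ) (hψm : StrictMono ψ) (hψa : ψ (-1) = a) (hψb : ψ 1 = b)
    {γ : ℝ → EuclideanSpace ℝ (Fin N)} (hγ : EqOn γ (σ ∘ ψ) (Ioo (-1) 1)) {K : ℝ≥0}
    (hK : LipschitzOnWith K γ (Ioo (-1) 1)) :
    curveCost W γ ≤ ∫⁻ t in Ioo a b, (‖g t‖ₑ ^ 2 + W (σ t)) := by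
  set F := energyDensity W σ g a b
  have hFm : AEMeasurable F := aemeasurable_energyDensity hW.measurable hσ hg
  have hFfin : ∫⁻ t, F t ≠ ⊤ :=
    (lintegral_indicator (f := fun t => ‖g t‖ₑ ^ 2 + W (σ t)) measurableSet_Ioo).trans_ne hE
  have hfi : Integrable fun t => (F t).toReal := integrable_toReal_of_lintegral_ne_top hFm hFfin
  have hψmaps : MapsTo ψ (Ioo (-1) 1) (Ioo a b) := by
    simpa [hψa, hψb] using hψm.mapsTo_Ioo (a := -1) (b := 1)
  set R : ℝ → ℝ := fun s => ∫ t in a..ψ s, (F t).toReal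
  have hchain : ∀ s ∈ Ioo (-1 : ℝ) 1, ∀ r : ℝ≥0, ∀ᶠ s' in 𝓝[>] s,
      (∀ u ∈ Ioo s s', (r : ℝ≥0∞) ^ 2 ≤ W (γ u)) → 2 * r * ‖γ s' - γ s‖ ≤ R s' - R s := by
    intro s hs r
    filter_upwards [Ioo_mem_nhdsGT hs.2] with s' hs' hwin
    have hs'mem : s' ∈ Ioo (-1 : ℝ) 1 := ⟨hs.1.trans hs'.1, hs'.2⟩
    have hWσ : ∀ t ∈ Ioo (ψ s) (ψ s'), (r : ℝ≥0∞) ^ 2 ≤ W (σ t) := by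
      intro t ht
      obtain ⟨u, hu, rfl⟩ := intermediate_value_Ioo hs'.1.le hψc.continuousOn ht
      simpa [hγ ⟨hs.1.trans hu.1, hu.2.trans hs'.2⟩] using hwin u hu
    rw [hγ hs, hγ hs'mem, Function.comp_apply, Function.comp_apply,
      intervalIntegral.integral_interval_sub_left hfi.intervalIntegrable hfi.intervalIntegrable]
    exact two_mul_norm_sub_le_intervalIntegral_energyDensity hFm hFfin (hψmaps hs)
      (hψmaps hs'mem) (hψm.monotone hs'.1.le) (hFTC _ (hψmaps hs) _ (hψmaps hs'mem)) hWσ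
  calc curveCost W γ = ∫⁻ s in Ioo (-1 : ℝ) 1, 2 * W (γ s) ^ (1 / 2 : ℝ) * ‖deriv γ s‖ₑ := by
        rw [curveCost, Measure.restrict_congr_set Ioo_ae_eq_Icc]
        rfl
    _ ≤ ENNReal.ofReal (R 1 - R (-1)) := by
        refine setLIntegral_Ioo_le_of_le_hasDerivAt
          ((monotone_intervalIntegral_of_nonneg hfi (fun _ => ENNReal.toReal_nonneg) a).comp
            hψm.monotone) ((hfi.continuous_primitive a).comp hψc) ?_
        filter_upwards [hK.ae_differentiableWithinAt_of_mem] with s hdiff hs d hd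
        exact two_mul_rpow_mul_enorm_le_of_hasDerivAt hW
          ((hdiff hs).differentiableAt (Ioo_mem_nhds hs.1 hs.2)).hasDerivAt hd (hchain s hs)
    _ = ∫⁻ t in Ioo a b, (‖g t‖ₑ ^ 2 + W (σ t)) := by
        simp only [R, hψa, hψb, intervalIntegral.integral_same, sub_zero]
        rw [ofReal_intervalIntegral_energyDensity hFm hFfin
          (hψa ▸ hψb ▸ hψm.le_iff_le.2 (by norm_num)), inter_self]

end

/-- `σ ∈ H¹_loc(I, ℝ^N)` is encoded by its a.e. derivative `g` via the fundamental theorem of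
calculus. -/
theorem energy_ge_geod_general {N : ℕ} (W : EuclideanSpace ℝ (Fin N) → ℝ≥0∞)
    (hlsc : LowerSemicontinuous W) (a b : ℝ) (hab : a < b)
    (σ g : ℝ → EuclideanSpace ℝ (Fin N)) (hg : Measurable g)
    (hFTC : ∀ s ∈ Set.Ioo a b, ∀ t ∈ Set.Ioo a b, σ t - σ s = ∫ r in s..t, g r)
    (pa pb : EuclideanSpace ℝ (Fin N))
    (hpa : Tendsto σ (nhdsWithin a (Set.Ioo a b)) (nhds pa))
    (hpb : Tendsto σ (nhdsWithin b (Set.Ioo a b)) (nhds pb)) :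
    geod W pa pb ≤ ∫⁻ t in Set.Ioo a b, ((‖g t‖₊ : ℝ≥0∞) ^ 2 + W (σ t)) := by
  rcases eq_or_ne (∫⁻ t in Ioo a b, ((‖g t‖₊ : ℝ≥0∞) ^ 2 + W (σ t))) ⊤ with hE | hE
  · exact hE ▸ le_top
  have hgi : IntegrableOn g (Ioo a b) :=
    integrableOn_of_setLIntegral_enorm_sq_ne_top measure_Ioo_lt_top.ne hg.aestronglyMeasurable
      (ne_top_of_le_ne_top hE (lintegral_mono fun _ => le_self_add))
  have hσ := continuousOn_of_sub_eq_intervalIntegral hgi hFTC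
  obtain ⟨ψ, hψc, hψm, hψa, hψb, K, hK⟩ := exists_reparam_intervalIntegral_le
    (fun t => norm_nonneg ((Ioo a b).indicator g t))
    (hgi.integrable_indicator measurableSet_Ioo).norm hab
  have hψmaps : MapsTo ψ (Ioo (-1) 1) (Ioo a b) := by
    simpa [hψa, hψb] using hψm.mapsTo_Ioo (a := -1) (b := 1)
  have hγ : EqOn (extendFrom (Ioo a b) σ ∘ ψ) (σ ∘ ψ) (Ioo (-1) 1) := fun s hs =>
    extendFrom_extends hσ _ (hψmaps hs)
  have hlip := lipschitzOnWith_of_eqOn_comp hFTC hψm.monotone hψmaps hγ hK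
  calc geod W pa pb ≤ curveCost W (extendFrom (Ioo a b) σ ∘ ψ) := iInf₂_le _
        (admissibleCurve_extendFrom_comp hab hσ hpa hpb hψc hψm.monotone hψa hψb hlip)
    _ ≤ _ := curveCost_le_setLIntegral hlsc hg hσ hFTC hE hψc hψm hψa hψb hγ hlip

/-- For lower semicontinuous `W : ℝ^N → [0,∞]`, an open interval `I = (a,b)`
and `σ ∈ H¹_loc(I, ℝ^N)` (encoded by its a.e. derivative `g` via the fundamental theorem of
calculus) with `∫_I |σ'|² < ∞` which admits limits `p_a`, `p_b` at the endpoints, the energy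
`E_W(σ, I) = ∫_I (|σ'|² + W(σ))` is at least `geod_W(p_a, p_b)`. -/
theorem energy_ge_geod {N : ℕ} (W : EuclideanSpace ℝ (Fin N) → ℝ≥0∞)
    (hlsc : LowerSemicontinuous W) (a b : ℝ) (hab : a < b)
    (σ g : ℝ → EuclideanSpace ℝ (Fin N)) (hg : Measurable g)
    (hFTC : ∀ s ∈ Set.Ioo a b, ∀ t ∈ Set.Ioo a b, σ t - σ s = ∫ r in s..t, g r)
    (hg2 : (∫⁻ t in Set.Ioo a b, (‖g t‖₊ : ℝ≥0∞) ^ 2) < ⊤)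
    (pa pb : EuclideanSpace ℝ (Fin N))
    (hpa : Tendsto σ (nhdsWithin a (Set.Ioo a b)) (nhds pa))
    (hpb : Tendsto σ (nhdsWithin b (Set.Ioo a b)) (nhds pb)) :
    geod W pa pb ≤ ∫⁻ t in Set.Ioo a b, ((‖g t‖₊ : ℝ≥0∞) ^ 2 + W (σ t)) :=
  energy_ge_geod_general W hlsc a b hab σ g hg hFTC pa pb hpa hpb
end

section
/- Let H be a Hilbert space, Σ ⊂ H nonempty, e : H → [0,∞] with zero set exactly Σ, and suppose for each ε > 0 that k_ε := inf{e(v) : dist(v,Σ) ≥ ε} > 0. Let σ : [0,∞) → H be continuous with ∫_0^∞ (‖σ'(t)‖² + e(σ(t))) dt < ∞ (σ ∈ H¹_loc with square-integrable derivative). Assume Σ is such that points of Σ are pairwise at distance ≥ 2ε₀ for some ε₀ > 0, and there exists a sequence t_n → ∞ with σ(t_n) → u⁺ for some u⁺ ∈ Σ. Then σ(t) → u⁺ in H as t → ∞. -/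
open MeasureTheory Metric Set Filter Topology
open scoped ENNReal NNReal

/-!
Suppose `σ` does not converge to `u⁺`, and let `ρ = min ε ε₀` where `σ` is at distance `≥ ε`
from `u⁺` at arbitrarily large times. Since `σ` also comes back within `ρ / 2` of `u⁺` at
arbitrarily large times, after every time `T` it crosses the annulus `ρ / 2 < dist (·, u⁺) < ρ`.
By the separation of `Σ` this annulus stays at distance `≥ ρ / 2` from `Σ`, so `e ≥ c² > 0` on it,
and by AM-GM `‖σ'‖² + e(σ) ≥ 2 c ‖σ'‖` during a crossing. Every crossing therefore costs energy
at least `2 c · ρ / 2`, contradicting the fact that the tail `∫_T^∞ (‖σ'‖² + e(σ))` tends to `0`.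
-/

theorem ENNReal.two_mul_le_add_sq (a b : ℝ≥0∞) : 2 * a * b ≤ a ^ 2 + b ^ 2 := by
  rcases eq_or_ne a ⊤ with rfl | ha
  · simp
  rcases eq_or_ne b ⊤ with rfl | hb
  · simp
  lift a to ℝ≥0 using ha
  lift b to ℝ≥0 using hb
  exact_mod_cast _root_.two_mul_le_add_sq a b

theorem ENNReal.exists_pos_sq_le {k : ℝ≥0∞} (hk : 0 < k) : ∃ c : ℝ≥0∞, 0 < c ∧ c ^ 2 ≤ k := by
  refine ⟨min k 1, lt_min hk one_pos, ?_⟩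
  calc min k 1 ^ 2 ≤ min k 1 * 1 := by rw [sq]; gcongr; exact min_le_right _ _
    _ ≤ k := (mul_one _).trans_le (min_le_left _ _)

theorem tendsto_setLIntegral_Ici_atTop {μ : Measure ℝ} {f : ℝ → ℝ≥0∞}
    (hf : ∫⁻ t, f t ∂μ ≠ ∞) : Tendsto (fun T ↦ ∫⁻ t in Ici T, f t ∂μ) atTop (𝓝 0) := by
  have h := tendsto_measure_iInter_atTop (μ := μ.withDensity f) (s := Ici)
    (fun _ ↦ measurableSet_Ici.nullMeasurableSet) antitone_Ici
    ⟨0, by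
      rw [withDensity_apply _ measurableSet_Ici]
      exact ne_top_of_le_ne_top hf (setLIntegral_le_lintegral _ _)⟩
  have hempty : ⋂ T : ℝ, Ici T = ∅ :=
    eq_empty_of_forall_notMem fun t ht ↦ (lt_add_one t).not_ge (mem_iInter.1 ht (t + 1))
  simpa [Function.comp_def, withDensity_apply _ measurableSet_Ici, hempty] using h

section Crossing

variable {α β : Type*} [ConditionallyCompleteLinearOrder α] [TopologicalSpace α] [OrderTopology α]
  [LinearOrder β] [TopologicalSpace β] [OrderClosedTopology β] {f : α → β}

theorem ContinuousOn.exists_first_ge {s τ : α} {y : β} (hsτ : s ≤ τ)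
    (hf : ContinuousOn f (Icc s τ)) (hτ : y ≤ f τ) :
    ∃ b ∈ Icc s τ, y ≤ f b ∧ ∀ t ∈ Ico s b, f t < y := by
  set B := Icc s τ ∩ f ⁻¹' Ici y
  have hB : IsClosed B := hf.preimage_isClosed_of_isClosed isClosed_Icc isClosed_Ici
  have hbdd : BddBelow B := ⟨s, fun t ht ↦ ht.1.1⟩
  obtain ⟨hb, hyb⟩ := hB.csInf_mem ⟨τ, right_mem_Icc.2 hsτ, hτ⟩ hbdd
  refine ⟨sInf B, hb, hyb, fun t ht ↦ not_le.1 fun hyt ↦ ?_⟩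
  exact (csInf_le hbdd ⟨⟨ht.1, ht.2.le.trans hb.2⟩, hyt⟩).not_gt ht.2

theorem ContinuousOn.exists_last_le {s b : α} {x : β} (hsb : s ≤ b)
    (hf : ContinuousOn f (Icc s b)) (hs : f s ≤ x) :
    ∃ a ∈ Icc s b, f a ≤ x ∧ ∀ t ∈ Ioc a b, x < f t := by
  have hf' : ContinuousOn (OrderDual.toDual ∘ f ∘ OrderDual.ofDual)
      (Icc (OrderDual.toDual b) (OrderDual.toDual s)) := by
    rw [Icc_toDual]; exact hf
  obtain ⟨a, ha, hxa, hlt⟩ := ContinuousOn.exists_first_ge (α := αᵒᵈ) (β := βᵒᵈ)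
    (s := OrderDual.toDual b) (τ := OrderDual.toDual s) hsb hf' hs
  exact ⟨OrderDual.ofDual a, ⟨ha.2, ha.1⟩, hxa, fun t ht ↦ hlt (OrderDual.toDual t) ⟨ht.2, ht.1⟩⟩

theorem ContinuousOn.exists_crossing_of_frequently [NoMaxOrder α] {T : α} {x y : β}
    (hf : ContinuousOn f (Ici T)) (hx : ∃ᶠ t in atTop, f t ≤ x) (hy : ∃ᶠ t in atTop, y ≤ f t) :
    ∃ a b, T ≤ a ∧ a ≤ b ∧ f a ≤ x ∧ y ≤ f b ∧ ∀ t ∈ Ioo a b, x < f t ∧ f t < y := by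
  obtain ⟨s, hTs, hsx⟩ := frequently_atTop.1 hx T
  obtain ⟨τ, hsτ, hyτ⟩ := frequently_atTop.1 hy s
  have hfs : ∀ u ≥ s, ContinuousOn f (Icc s u) :=
    fun u _ ↦ hf.mono fun t ht ↦ hTs.trans ht.1
  obtain ⟨b, hb, hyb, hbelow⟩ := (hfs τ hsτ).exists_first_ge hsτ hyτ
  obtain ⟨a, ha, hxa, habove⟩ := (hfs b hb.1).exists_last_le hb.1 hsx
  exact ⟨a, b, hTs.trans ha.1, ha.2, hxa, hyb, fun t ht ↦
    ⟨habove t ⟨ht.1, ht.2.le⟩, hbelow t ⟨ha.1.trans ht.1.le, ht.2⟩⟩⟩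

end Crossing

theorem le_infDist_of_isolated {X : Type*} [PseudoMetricSpace X] {S : Set X} {u v : X}
    {r R : ℝ} (hu : u ∈ S) (hsep : ∀ q ∈ S, q ≠ u → R ≤ dist q u) (hr : r ≤ dist v u)
    (hR : dist v u ≤ R - r) : r ≤ infDist v S := by
  refine (le_infDist ⟨u, hu⟩).2 fun q hq ↦ ?_
  rcases eq_or_ne q u with rfl | hqu
  · exact hr
  · linarith [hsep q hq hqu, dist_triangle_left q u v]

theorem two_mul_enorm_sub_le_setLIntegral_s13 {E : Type*} [NormedAddCommGroup E] [NormedSpace ℝ E]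
    {σ g : ℝ → E} {w : ℝ → ℝ≥0∞} {a b : ℝ} {c : ℝ≥0∞} (hab : a ≤ b)
    (hσ : σ b - σ a = ∫ t in a..b, g t) (hw : ∀ t ∈ Ioo a b, c ^ 2 ≤ w t) :
    2 * c * ‖σ b - σ a‖ₑ ≤ ∫⁻ t in Ioo a b, ‖g t‖ₑ ^ 2 + w t :=
  calc 2 * c * ‖σ b - σ a‖ₑ = 2 * c * ‖∫ t in Ioo a b, g t‖ₑ := by
        rw [hσ, intervalIntegral.integral_of_le hab, integral_Ioc_eq_integral_Ioo]
    _ ≤ 2 * c * ∫⁻ t in Ioo a b, ‖g t‖ₑ := by gcongr; exact enorm_integral_le_lintegral_enorm _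
    _ ≤ ∫⁻ t in Ioo a b, 2 * c * ‖g t‖ₑ := lintegral_const_mul_le _ _
    _ ≤ ∫⁻ t in Ioo a b, ‖g t‖ₑ ^ 2 + c ^ 2 :=
        lintegral_mono fun t ↦ (ENNReal.two_mul_le_add_sq _ _).trans_eq (add_comm _ _)
    _ ≤ ∫⁻ t in Ioo a b, ‖g t‖ₑ ^ 2 + w t :=
        setLIntegral_mono' measurableSet_Ioo fun t ht ↦ by gcongr; exact hw t ht

theorem two_mul_ofReal_sub_le_setLIntegral_Ici {E : Type*} [NormedAddCommGroup E]
    [NormedSpace ℝ E] {σ g : ℝ → E} {e : E → ℝ≥0∞} {u : E} {T r R : ℝ} {c : ℝ≥0∞}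
    (hσ : ContinuousOn σ (Ici T))
    (hFTC : ∀ s ∈ Ici T, ∀ t ∈ Ici T, σ t - σ s = ∫ τ in s..t, g τ)
    (hnear : ∃ᶠ t in atTop, dist (σ t) u ≤ r) (hfar : ∃ᶠ t in atTop, R ≤ dist (σ t) u)
    (he : ∀ v, r < dist v u → dist v u < R → c ^ 2 ≤ e v) :
    2 * c * ENNReal.ofReal (R - r) ≤ ∫⁻ t in Ici T, ‖g t‖ₑ ^ 2 + e (σ t) := by
  have hdist : ContinuousOn (fun t ↦ dist (σ t) u) (Ici T) :=
    (continuous_id.dist continuous_const).comp_continuousOn hσ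
  obtain ⟨a, b, hTa, hab, ha, hb, hannulus⟩ := hdist.exists_crossing_of_frequently hnear hfar
  have hdisp : ENNReal.ofReal (R - r) ≤ ‖σ b - σ a‖ₑ := by
    rw [← ofReal_norm, ← dist_eq_norm]
    exact ENNReal.ofReal_le_ofReal (by linarith [dist_triangle (σ b) (σ a) u])
  calc 2 * c * ENNReal.ofReal (R - r) ≤ 2 * c * ‖σ b - σ a‖ₑ := by gcongr
    _ ≤ ∫⁻ t in Ioo a b, ‖g t‖ₑ ^ 2 + e (σ t) :=
        two_mul_enorm_sub_le_setLIntegral_s13 hab (hFTC a hTa b (hTa.trans hab))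
          fun t ht ↦ he _ (hannulus t ht).1 (hannulus t ht).2
    _ ≤ ∫⁻ t in Ici T, ‖g t‖ₑ ^ 2 + e (σ t) := lintegral_mono_set fun t ht ↦ hTa.trans ht.1.le

theorem abstract_convergence_general {H : Type*} [NormedAddCommGroup H] [InnerProductSpace ℝ H]
    (S : Set H)
    (ε₀ : ℝ) (hε₀ : 0 < ε₀) (hsep : ∀ p ∈ S, ∀ q ∈ S, p ≠ q → 2 * ε₀ ≤ dist p q)
    (e : H → ℝ≥0∞)
    (hk : ∀ ε : ℝ, 0 < ε → ∃ k : ℝ≥0∞, 0 < k ∧ ∀ v : H, ε ≤ Metric.infDist v S → k ≤ e v)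
    (σ g : ℝ → H) (hσ : ContinuousOn σ (Set.Ici 0))
    (hFTC : ∀ s ∈ Set.Ici (0:ℝ), ∀ t ∈ Set.Ici (0:ℝ), σ t - σ s = ∫ r in s..t, g r)
    (hE : (∫⁻ t in Set.Ici (0:ℝ), ((‖g t‖₊ : ℝ≥0∞) ^ 2 + e (σ t))) < ⊤)
    (tn : ℕ → ℝ) (htn : Tendsto tn atTop atTop)
    (uplus : H) (hup : uplus ∈ S)
    (hconv : Tendsto (fun n => σ (tn n)) atTop (nhds uplus)) :
    Tendsto σ atTop (nhds uplus) := by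
  by_contra hnot
  obtain ⟨ε, hε, hfar⟩ : ∃ ε > 0, ∃ᶠ t in atTop, ε ≤ dist (σ t) uplus := by
    simpa [Metric.tendsto_nhds, frequently_atTop] using hnot
  set ρ := min ε ε₀
  have hρ : 0 < ρ := lt_min hε hε₀
  have hnear : ∃ᶠ t in atTop, dist (σ t) uplus ≤ ρ / 2 :=
    (hconv.mapClusterPt.of_comp htn).frequently (closedBall_mem_nhds uplus (half_pos hρ))
  obtain ⟨k, hk0, hke⟩ := hk (ρ / 2) (half_pos hρ)
  obtain ⟨c, hc0, hck⟩ := ENNReal.exists_pos_sq_le hk0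
  have he : ∀ v, ρ / 2 < dist v uplus → dist v uplus < ρ → c ^ 2 ≤ e v := fun v h₁ h₂ ↦
    hck.trans <| hke v <| le_infDist_of_isolated hup (fun q hq hqu ↦ hsep q hq uplus hup hqu)
      h₁.le (by linarith [min_le_right ε ε₀])
  have hcost : ∀ T ≥ 0,
      2 * c * ENNReal.ofReal (ρ - ρ / 2) ≤ ∫⁻ t in Ici T, ‖g t‖ₑ ^ 2 + e (σ t) := fun T hT ↦
    two_mul_ofReal_sub_le_setLIntegral_Ici (hσ.mono (Ici_subset_Ici.2 hT))
      (fun s hs t ht ↦ hFTC s (hT.trans hs) t (hT.trans ht)) hnear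
      (hfar.mono fun t ht ↦ (min_le_left ε ε₀).trans ht) he
  have hpos : 0 < 2 * c * ENNReal.ofReal (ρ - ρ / 2) := by
    simpa [pos_iff_ne_zero, hc0.ne'] using half_pos hρ
  obtain ⟨T, hsmall, hT⟩ := (((tendsto_setLIntegral_Ici_atTop (μ := volume.restrict (Ici 0))
    hE.ne).eventually (gt_mem_nhds hpos)).and (eventually_ge_atTop 0)).exists
  rw [Measure.restrict_restrict measurableSet_Ici, Ici_inter_Ici, max_eq_left hT] at hsmall
  exact (hcost T hT).not_gt hsmall

/-- **abstract annulus-crossing lemma.** Let `H` be a Hilbert space,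
`Σ ⊂ H` nonempty with pairwise distances `≥ 2ε₀ > 0`, and `e : H → [0,∞]` with zero set
exactly `Σ` and `inf {e(v) : dist(v,Σ) ≥ ε} > 0` for all `ε > 0`. If `σ : [0,∞) → H` is
continuous, with derivative `g` (in the FTC sense) satisfying
`∫_0^∞ (‖σ'‖² + e(σ)) < ∞`, and `σ(t_n) → u⁺ ∈ Σ` along some `t_n → ∞`, then
`σ(t) → u⁺` as `t → ∞`. -/
theorem abstract_convergence {H : Type*} [NormedAddCommGroup H] [InnerProductSpace ℝ H]
    [CompleteSpace H]
    (S : Set H) (hne : S.Nonempty)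
    (ε₀ : ℝ) (hε₀ : 0 < ε₀) (hsep : ∀ p ∈ S, ∀ q ∈ S, p ≠ q → 2 * ε₀ ≤ dist p q)
    (e : H → ℝ≥0∞) (hzero : {v : H | e v = 0} = S)
    (hk : ∀ ε : ℝ, 0 < ε → ∃ k : ℝ≥0∞, 0 < k ∧ ∀ v : H, ε ≤ Metric.infDist v S → k ≤ e v)
    (σ g : ℝ → H) (hσ : ContinuousOn σ (Set.Ici 0)) (hg : AEStronglyMeasurable g (volume.restrict (Set.Ici 0)))
    (hFTC : ∀ s ∈ Set.Ici (0:ℝ), ∀ t ∈ Set.Ici (0:ℝ), σ t - σ s = ∫ r in s..t, g r)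
    (hE : (∫⁻ t in Set.Ici (0:ℝ), ((‖g t‖₊ : ℝ≥0∞) ^ 2 + e (σ t))) < ⊤)
    (tn : ℕ → ℝ) (htn : Tendsto tn atTop atTop)
    (uplus : H) (hup : uplus ∈ S)
    (hconv : Tendsto (fun n => σ (tn n)) atTop (nhds uplus)) :
    Tendsto σ atTop (nhds uplus) :=
  abstract_convergence_general S ε₀ hε₀ hsep e hk σ g hσ hFTC hE tn htn uplus hup hconv
end
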